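/- Let p be an odd prime, n ≥ 1, q = p^n, and let F(x) = x^{q − 2} be the inverse power function over GF(q). Let c ∈ GF(q) with c ∉ {0, 1, 4, 4^{-1}}. If χ(c² − 4c) = 1, χ(1 − 4c) = 1, and χ(c) = −1, then the c-differential spectrum of F is given by ω_0 = (q + 1)/2, ω_1 = 1, ω_2 = (q − 7)/2, ω_3 = 2, and ω_i = 0 for i ≥ 4. -/

import Mathlib

/-!
For `x ≠ 0, -1` the equation `(x + 1)⁻¹ - c * x⁻¹ = b` is the quadratic
`b x² + (b + c - 1) x + c = 0`, which has neither `0` nor `-1` as a root, while `x = 0` and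
`x = -1` solve it exactly for `b = 1` and `b = c`. The discriminant `(b - c - 1)² - 4c` never
vanishes since `c` is a nonsquare, so `δ(b) ∈ {0, 2}` for `b ∉ {0, 1, c}`; moreover `δ(0) = 1`
(the quadratic degenerates to a linear equation) and `δ(1) = δ(c) = 3`, the discriminants
`c² - 4c` and `1 - 4c` being nonzero squares. As the `δ(b)` add up to `q`, exactly `(q - 7) / 2`
values of `b` have `δ(b) = 2`.
-/

open Finset

/-- `cdelta F d c b` is the number of `x` in the finite field `F` with
`(x+1)^d - c * x^d = b`, i.e. the entry `δ_c(b)` of the `c`-DDT of `x ↦ x^d`. -/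
noncomputable def cdelta (F : Type*) [Field F] (d : ℕ) (c b : F) : ℕ :=
  Nat.card {x : F // (x + 1) ^ d - c * x ^ d = b}

/-- `comega F d c i` is the number of `b` in `F` with `δ_c(b) = i`,
i.e. the value `ω_i` of the `c`-differential spectrum of `x ↦ x^d`. -/
noncomputable def comega (F : Type*) [Field F] (d : ℕ) (c : F) (i : ℕ) : ℕ :=
  Nat.card {b : F // cdelta F d c b = i}

open scoped Classical in
/-- The quadratic character of `F`, valued in `ℤ`. -/
noncomputable def chi (F : Type*) [Field F] (x : F) : ℤ :=
  if x = 0 then 0 else if IsSquare x then 1 else -1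

section Generic

variable {K : Type*} [Field K] [Fintype K]

theorem FiniteField.pow_card_sub_two (hK : 2 < Fintype.card K) (x : K) :
    x ^ (Fintype.card K - 2) = x⁻¹ := by
  rcases eq_or_ne x 0 with rfl | hx
  · rw [zero_pow (by omega), inv_zero]
  · refine eq_inv_of_mul_eq_one_left ?_
    rw [← pow_succ, show Fintype.card K - 2 + 1 = Fintype.card K - 1 by omega,
      FiniteField.pow_card_sub_one_eq_one x hx]

theorem sum_cdelta (d : ℕ) (c : K) : ∑ b, cdelta K d c b = Fintype.card K := by
  classical
  simp only [cdelta, Nat.card_eq_fintype_card, Fintype.card_eq_sum_ones]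
  exact Fintype.sum_fiberwise (fun x : K => (x + 1) ^ d - c * x ^ d) (fun _ => 1)

theorem cdelta_card_sub_two [DecidableEq K] (hK : 2 < Fintype.card K) (c b : K) :
    cdelta K (Fintype.card K - 2) c b = #{x | (x + 1)⁻¹ - c * x⁻¹ = b} := by
  simp only [cdelta, FiniteField.pow_card_sub_two hK, Nat.card_eq_fintype_card,
    Fintype.card_subtype]

theorem chi_eq_one_iff (x : K) : chi K x = 1 ↔ x ≠ 0 ∧ IsSquare x := by
  unfold chi; split_ifs <;> simp_all

theorem chi_eq_neg_one_iff (x : K) : chi K x = -1 ↔ ¬ IsSquare x := by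
  unfold chi; split_ifs <;> simp_all

end Generic

section Quadratic

variable {K : Type*} [Field K] [Fintype K] [DecidableEq K] {a b c : K}

theorem card_quadratic_roots_eq_two [NeZero (2 : K)] (ha : a ≠ 0) (hD : IsSquare (discrim a b c))
    (hD0 : discrim a b c ≠ 0) : #{x | a * (x * x) + b * x + c = 0} = 2 := by
  obtain ⟨s, hs⟩ := hD
  have hs0 : s ≠ 0 := by
    rintro rfl
    exact hD0 (by simpa using hs)
  have hroots : ({x | a * (x * x) + b * x + c = 0} : Finset K) =
      {(-b + s) / (2 * a), (-b - s) / (2 * a)} := by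
    ext x
    simp [quadratic_eq_zero_iff ha hs x]
  rw [hroots, card_pair]
  rw [Ne, div_left_inj' (mul_ne_zero two_ne_zero ha)]
  intro h
  have h2s : 2 * s = 0 := by linear_combination h
  exact hs0 ((mul_eq_zero.mp h2s).resolve_left two_ne_zero)

theorem card_quadratic_roots_eq_zero (h : ¬ IsSquare (discrim a b c)) :
    #{x | a * (x * x) + b * x + c = 0} = 0 := by
  rw [card_eq_zero, filter_eq_empty_iff]
  exact fun x _ => quadratic_ne_zero_of_discrim_ne_sq (fun s hs => h ⟨s, hs.trans (sq s)⟩) x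

end Quadratic

theorem card_levelSets_of_values {α : Type*} [Fintype α] (f : α → ℕ) {a b c : α}
    (hab : a ≠ b) (hac : a ≠ c) (hbc : b ≠ c) (ha : f a = 1) (hb : f b = 3) (hc : f c = 3)
    (hrest : ∀ x, x ≠ a → x ≠ b → x ≠ c → f x = 0 ∨ f x = 2)
    (hsum : ∑ x, f x = Fintype.card α) :
    Nat.card {x // f x = 0} = (Fintype.card α + 1) / 2 ∧
    Nat.card {x // f x = 1} = 1 ∧
    Nat.card {x // f x = 2} = (Fintype.card α - 7) / 2 ∧
    Nat.card {x // f x = 3} = 2 ∧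
    ∀ i, 4 ≤ i → Nat.card {x // f x = i} = 0 := by
  classical
  have hval : ∀ x, (f x = 1 ↔ x = a) ∧ (f x = 3 ↔ x = b ∨ x = c) ∧ f x < 4 := by
    intro x
    by_cases hxa : x = a
    · subst hxa; simp [ha, hab, hac]
    by_cases hxb : x = b
    · subst hxb; simp [hb, hxa, hbc]
    by_cases hxc : x = c
    · subst hxc; simp [hc, hxa, hxb]
    rcases hrest x hxa hxb hxc with h | h <;> simp [h, hxa, hxb, hxc]
  set N : ℕ → ℕ := fun i => #{x | f x = i} with hN
  have hcardN : ∀ i, Nat.card {x // f x = i} = N i := fun i => by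
    rw [Nat.card_eq_fintype_card, Fintype.card_subtype]
  have hmaps : ∀ x ∈ (univ : Finset α), f x ∈ range 4 := fun x _ => mem_range.2 (hval x).2.2
  have hcard : Fintype.card α = N 0 + N 1 + N 2 + N 3 := by
    rw [← card_univ, card_eq_sum_card_fiberwise hmaps]
    simp [sum_range_succ, hN]
  have hsumN : ∑ x, f x = N 1 + 2 * N 2 + 3 * N 3 := by
    rw [← sum_fiberwise_of_maps_to' hmaps (fun i => i)]
    simp [sum_range_succ, hN, mul_comm]
  have hN1 : N 1 = 1 := by
    show #{x | f x = 1} = 1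
    rw [card_eq_one]
    exact ⟨a, by ext x; simp [(hval x).1]⟩
  have hN3 : N 3 = 2 := by
    show #{x | f x = 3} = 2
    rw [← card_pair hbc]
    congr 1; ext x; simp [(hval x).2.1]
  have hN4 : ∀ i, 4 ≤ i → N i = 0 := fun i hi => by
    show #{x | f x = i} = 0
    rw [card_eq_zero, filter_eq_empty_iff]
    exact fun x _ => by have := (hval x).2.2; omega
  simp only [hcardN]
  refine ⟨by omega, hN1, by omega, hN3, hN4⟩

theorem inv_add_one_sub_mul_inv_eq_iff {K : Type*} [Field K] {c : K} (hc : c ≠ 0) (b x : K) :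
    (x + 1)⁻¹ - c * x⁻¹ = b ↔
      b * (x * x) + (b + c - 1) * x + c = 0 ∨ x = 0 ∧ b = 1 ∨ x = -1 ∧ b = c := by
  rcases eq_or_ne x 0 with rfl | hx
  · simp [hc, eq_comm]
  rcases eq_or_ne x (-1) with rfl | hx1
  · have hQ : b * (-1 * -1) + (b + c - 1) * -1 + c = 1 := by ring
    rw [hQ]
    simp [eq_comm]
  have hx1' : x + 1 ≠ 0 := fun h => hx1 (eq_neg_of_add_eq_zero_left h)
  simp only [hx, hx1, false_and, or_false]
  field_simp
  constructor <;> intro h <;> linear_combination -h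

section InverseFunction

variable {K : Type*} [Field K] [Fintype K] [DecidableEq K] {b c : K}

theorem card_fiber_inv_of_ne (hc0 : c ≠ 0) (hb1 : b ≠ 1) (hbc : b ≠ c) :
    #{x | (x + 1)⁻¹ - c * x⁻¹ = b} = #{x | b * (x * x) + (b + c - 1) * x + c = 0} := by
  congr 1
  ext x
  simp [inv_add_one_sub_mul_inv_eq_iff hc0, hb1, hbc]

theorem card_fiber_inv_zero (hc0 : c ≠ 0) (hc1 : c ≠ 1) :
    #{x | (x + 1)⁻¹ - c * x⁻¹ = 0} = 1 := by
  rw [card_fiber_inv_of_ne hc0 zero_ne_one hc0.symm, card_eq_one]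
  refine ⟨c / (1 - c), ?_⟩
  ext x
  rw [mem_filter, mem_singleton, eq_div_iff (sub_ne_zero.2 hc1.symm)]
  constructor
  · rintro ⟨-, h⟩
    linear_combination -h
  · intro h
    exact ⟨mem_univ x, by linear_combination -h⟩

theorem card_fiber_inv_one [NeZero (2 : K)] (hc0 : c ≠ 0) (hc1 : c ≠ 1)
    (hD : IsSquare (c ^ 2 - 4 * c)) (hD0 : c ^ 2 - 4 * c ≠ 0) :
    #{x | (x + 1)⁻¹ - c * x⁻¹ = 1} = 3 := by
  have hfiber : ({x | (x + 1)⁻¹ - c * x⁻¹ = 1} : Finset K) =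
      insert 0 ({x | 1 * (x * x) + (1 + c - 1) * x + c = 0} : Finset K) := by
    ext x
    simp [inv_add_one_sub_mul_inv_eq_iff hc0, hc1.symm, or_comm]
  have hdisc : discrim 1 (1 + c - 1) c = c ^ 2 - 4 * c := by
    unfold discrim
    ring
  rw [hfiber, card_insert_of_notMem (by simp [hc0]),
    card_quadratic_roots_eq_two one_ne_zero (hdisc ▸ hD) (hdisc ▸ hD0)]

theorem card_fiber_inv_self [NeZero (2 : K)] (hc0 : c ≠ 0) (hc1 : c ≠ 1)
    (hD : IsSquare (1 - 4 * c)) (hD0 : 1 - 4 * c ≠ 0) :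
    #{x | (x + 1)⁻¹ - c * x⁻¹ = c} = 3 := by
  have hfiber : ({x | (x + 1)⁻¹ - c * x⁻¹ = c} : Finset K) =
      insert (-1) ({x | c * (x * x) + (c + c - 1) * x + c = 0} : Finset K) := by
    ext x
    simp [inv_add_one_sub_mul_inv_eq_iff hc0, hc1, or_comm]
  have hdisc : discrim c (c + c - 1) c = 1 - 4 * c := by
    unfold discrim
    ring
  have hQ : c * (-1 * -1) + (c + c - 1) * -1 + c ≠ 0 := by
    ring_nf
    exact one_ne_zero
  rw [hfiber, card_insert_of_notMem (by simpa using hQ),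
    card_quadratic_roots_eq_two hc0 (hdisc ▸ hD) (hdisc ▸ hD0)]

theorem card_fiber_inv_eq_zero_or_two [NeZero (2 : K)] (hc : ¬ IsSquare c) (hb0 : b ≠ 0)
    (hb1 : b ≠ 1) (hbc : b ≠ c) :
    #{x | (x + 1)⁻¹ - c * x⁻¹ = b} = 0 ∨ #{x | (x + 1)⁻¹ - c * x⁻¹ = b} = 2 := by
  have hc0 : c ≠ 0 := by
    rintro rfl
    exact hc IsSquare.zero
  rw [card_fiber_inv_of_ne hc0 hb1 hbc]
  -- the discriminant equals `(b - c - 1) ^ 2 - 4 * c`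
  have hD0 : discrim b (b + c - 1) c ≠ 0 := by
    intro hD
    refine hc ⟨(b - c - 1) / 2, ?_⟩
    field_simp
    unfold discrim at hD
    linear_combination -hD
  by_cases hD : IsSquare (discrim b (b + c - 1) c)
  · exact Or.inr (card_quadratic_roots_eq_two hb0 hD hD0)
  · exact Or.inl (card_quadratic_roots_eq_zero hD)

end InverseFunction

theorem stmt_9_general (p n : ℕ) (hpodd : Odd p)
    (F : Type*) [Field F] [Fintype F] (hF : Fintype.card F = p ^ n)
    (c : F)
    (h1 : chi F (c ^ 2 - 4 * c) = 1) (h2 : chi F (1 - 4 * c) = 1) (h3 : chi F c = -1) :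
    comega F (p ^ n - 2) c 0 = (p ^ n + 1) / 2 ∧
    comega F (p ^ n - 2) c 1 = 1 ∧
    comega F (p ^ n - 2) c 2 = (p ^ n - 7) / 2 ∧
    comega F (p ^ n - 2) c 3 = 2 ∧
    ∀ i, 4 ≤ i → comega F (p ^ n - 2) c i = 0 := by
  classical
  have hodd : Fintype.card F % 2 = 1 := hF ▸ Nat.odd_iff.mp hpodd.pow
  have : NeZero (2 : F) := ⟨Ring.two_ne_zero fun h => by
    have := FiniteField.even_card_iff_char_two.mp h
    omega⟩
  have hq : 2 < Fintype.card F := by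
    have := Fintype.one_lt_card (α := F)
    omega
  obtain ⟨hA0, hA⟩ := (chi_eq_one_iff _).1 h1
  obtain ⟨hB0, hB⟩ := (chi_eq_one_iff _).1 h2
  have hc := (chi_eq_neg_one_iff c).1 h3
  have hc0 : c ≠ 0 := by
    rintro rfl
    exact hc IsSquare.zero
  have hc1 : c ≠ 1 := by
    rintro rfl
    exact hc IsSquare.one
  rw [← hF]
  simp only [comega]
  refine card_levelSets_of_values _ zero_ne_one hc0.symm hc1.symm ?_ ?_ ?_ ?_ (sum_cdelta _ c)
    <;> simp only [cdelta_card_sub_two hq]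
  · exact card_fiber_inv_zero hc0 hc1
  · exact card_fiber_inv_one hc0 hc1 hA hA0
  · exact card_fiber_inv_self hc0 hc1 hB hB0
  · exact fun b hb0 hb1 hbc => card_fiber_inv_eq_zero_or_two hc hb0 hb1 hbc

theorem stmt_9 (p n : ℕ) (hp : p.Prime) (hpodd : Odd p) (hn : 1 ≤ n)
    (F : Type*) [Field F] [Fintype F] (hF : Fintype.card F = p ^ n)
    (c : F) (hc0 : c ≠ 0) (hc1 : c ≠ 1) (hc4 : c ≠ 4) (hc4i : c ≠ (4 : F)⁻¹)
    (h1 : chi F (c ^ 2 - 4 * c) = 1) (h2 : chi F (1 - 4 * c) = 1) (h3 : chi F c = -1) :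
    comega F (p ^ n - 2) c 0 = (p ^ n + 1) / 2 ∧
    comega F (p ^ n - 2) c 1 = 1 ∧
    comega F (p ^ n - 2) c 2 = (p ^ n - 7) / 2 ∧
    comega F (p ^ n - 2) c 3 = 2 ∧
    ∀ i, 4 ≤ i → comega F (p ^ n - 2) c i = 0 :=
  stmt_9_general p n hpodd F hF c h1 h2 h3
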